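/- Let F : ℝ^d → ℝ be differentiable with L₁-Lipschitz gradient. Let x, g ∈ ℝ^d, let 0 < η ≤ 1/(2L₁), and set y := x − η·g. Then F(x) − F(y) ≥ (η/8)·‖∇F(x)‖² − (3η/4)·‖∇F(x) − g‖². -/

import Mathlib

/-!
Comparing `F` with its linearization at `x` by the mean value inequality on a ball around `x`
gives `|F y - F x - ⟪∇F x, y - x⟫| ≤ L₁ ‖y - x‖²`. For `y = x - η g` with `η L₁ ≤ 1/2` this yields
`F x - F y ≥ η ⟪∇F x, g⟫ - (η/2) ‖g‖² = (η/2) (‖∇F x‖² - ‖∇F x - g‖²)`, which is stronger than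
the claim.
-/

open scoped RealInnerProductSpace NNReal

section

variable {E : Type*} [NormedAddCommGroup E] [InnerProductSpace ℝ E] [CompleteSpace E]
  {F : E → ℝ} {gradF : E → E} {K : ℝ≥0}

theorem abs_sub_sub_inner_le_of_lipschitzWith_gradient
    (hgrad : ∀ z, HasGradientAt F (gradF z) z) (hlip : LipschitzWith K gradF) (x y : E) :
    |F y - F x - ⟪gradF x, y - x⟫| ≤ K * ‖y - x‖ ^ 2 := by
  have hball : y ∈ Metric.closedBall x ‖y - x‖ := by
    rw [Metric.mem_closedBall, dist_eq_norm]
  have hderiv : ∀ z ∈ Metric.closedBall x ‖y - x‖,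
      HasFDerivWithinAt F (InnerProductSpace.toDual ℝ E (gradF z)) (Metric.closedBall x ‖y - x‖) z :=
    fun z _ => (hasGradientAt_iff_hasFDerivAt.mp (hgrad z)).hasFDerivWithinAt
  have hbound : ∀ z ∈ Metric.closedBall x ‖y - x‖,
      ‖InnerProductSpace.toDual ℝ E (gradF z) - InnerProductSpace.toDual ℝ E (gradF x)‖
        ≤ K * ‖y - x‖ := by
    intro z hz
    rw [Metric.mem_closedBall] at hz
    rw [← map_sub, LinearIsometryEquiv.norm_map, ← dist_eq_norm]
    exact (hlip.dist_le_mul z x).trans (by gcongr)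
  have h := (convex_closedBall x ‖y - x‖).norm_image_sub_le_of_norm_hasFDerivWithin_le' hderiv
    hbound (Metric.mem_closedBall_self (norm_nonneg _)) hball
  rw [InnerProductSpace.toDual_apply_apply, Real.norm_eq_abs] at h
  linarith

theorem half_mul_sub_le_sub_of_inexact_gradient_step
    (hgrad : ∀ z, HasGradientAt F (gradF z) z) (hlip : LipschitzWith K gradF) (x g : E) {η : ℝ}
    (hη₀ : 0 ≤ η) (hη : η * K ≤ 1 / 2) :
    η / 2 * (‖gradF x‖ ^ 2 - ‖gradF x - g‖ ^ 2) ≤ F x - F (x - η • g) := by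
  have hlin := abs_le.mp (abs_sub_sub_inner_le_of_lipschitzWith_gradient hgrad hlip x (x - η • g))
  have hstep : x - η • g - x = -(η • g) := by abel
  rw [hstep, inner_neg_right, real_inner_smul_right, norm_neg, norm_smul, Real.norm_eq_abs,
    abs_of_nonneg hη₀] at hlin
  have hquad : K * (η * ‖g‖) ^ 2 ≤ η / 2 * ‖g‖ ^ 2 := by
    have := mul_le_mul_of_nonneg_right hη (mul_nonneg hη₀ (sq_nonneg ‖g‖))
    nlinarith
  have hpolar : ‖gradF x - g‖ ^ 2 = ‖gradF x‖ ^ 2 - 2 * ⟪gradF x, g⟫ + ‖g‖ ^ 2 :=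
    norm_sub_sq_real _ _
  nlinarith

end

theorem stmt_0 {d : ℕ} (F : EuclideanSpace ℝ (Fin d) → ℝ)
    (gradF : EuclideanSpace ℝ (Fin d) → EuclideanSpace ℝ (Fin d)) (L₁ : ℝ)
    (hgrad : ∀ z, HasGradientAt F (gradF z) z)
    (hlip : ∀ z w, ‖gradF z - gradF w‖ ≤ L₁ * ‖z - w‖)
    (x g : EuclideanSpace ℝ (Fin d)) (η : ℝ) (hη₀ : 0 < η) (hη : η ≤ 1 / (2 * L₁))
    (y : EuclideanSpace ℝ (Fin d)) (hy : y = x - η • g) :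
    F x - F y ≥ η / 8 * ‖gradF x‖ ^ 2 - 3 * η / 4 * ‖gradF x - g‖ ^ 2 := by
  have hL₁ : 0 < L₁ := by
    by_contra! h
    have : 1 / (2 * L₁) ≤ 0 := div_nonpos_of_nonneg_of_nonpos zero_le_one (by linarith)
    linarith
  have hηL₁ : η * L₁ ≤ 1 / 2 := by
    rw [le_div_iff₀ (by positivity)] at hη
    linarith
  have hlip' : LipschitzWith L₁.toNNReal gradF := LipschitzWith.of_dist_le_mul fun z w => by
    simpa only [Real.coe_toNNReal _ hL₁.le, dist_eq_norm] using hlip z w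
  have hdescent := half_mul_sub_le_sub_of_inexact_gradient_step hgrad hlip' x g hη₀.le
    (by rwa [Real.coe_toNNReal _ hL₁.le])
  subst hy
  nlinarith [sq_nonneg ‖gradF x‖, sq_nonneg ‖gradF x - g‖]
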